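/- arXiv:2207.04379 — 2 statements merged into one kernel-verified Lean document; each statement's English description precedes it below -/
import Mathlib

section
/- Let θ ∈ ℚ_p, θ ≠ 0 and θ ≠ 4, and suppose z satisfies z² + (2 - θ)z + 1 = 0. Then z is not a fixed point of f(z) = θ/(1+z)², i.e., z(1+z)² ≠ θ, but z is a 2-periodic point: f(f(z)) = z. -/
/-!
The quadratic says exactly that `(1 + z)² = θ z`, so `f z = θ / (θ z) = z⁻¹`, and symmetrically
`f z⁻¹ = θ z² / (1 + z)² = z`: the roots form a 2-cycle `z ↦ z⁻¹ ↦ z`. A fixed point would give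
`θ = z (1 + z)² = θ z²`, i.e. `z = ±1`; but `z = -1` forces `θ = 0` and `z = 1` forces `θ = 4`.
-/

namespace QuadraticRoot

variable {K : Type*} [Field K] {θ z : K}

theorem one_add_sq_eq (hz : z ^ 2 + (2 - θ) * z + 1 = 0) : (1 + z) ^ 2 = θ * z := by
  linear_combination hz

theorem ne_zero (hz : z ^ 2 + (2 - θ) * z + 1 = 0) : z ≠ 0 := by
  rintro rfl
  simp at hz

theorem one_add_ne_zero (hθ0 : θ ≠ 0) (hz : z ^ 2 + (2 - θ) * z + 1 = 0) : 1 + z ≠ 0 := by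
  intro h
  have hz_neg_one : z = -1 := by linear_combination h
  subst hz_neg_one
  exact hθ0 (by linear_combination hz)

theorem div_one_add_sq_eq_inv (hθ0 : θ ≠ 0) (hz : z ^ 2 + (2 - θ) * z + 1 = 0) :
    θ / (1 + z) ^ 2 = z⁻¹ := by
  have hz0 := ne_zero hz
  rw [one_add_sq_eq hz]
  field_simp

theorem div_one_add_inv_sq_eq (hθ0 : θ ≠ 0) (hz : z ^ 2 + (2 - θ) * z + 1 = 0) :
    θ / (1 + z⁻¹) ^ 2 = z := by
  have hz0 := ne_zero hz
  calc θ / (1 + z⁻¹) ^ 2 = θ * z ^ 2 / (1 + z) ^ 2 := by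
        rw [inv_eq_one_div, one_add_div hz0, div_pow, div_div_eq_mul_div, add_comm z 1]
    _ = z := by rw [one_add_sq_eq hz]; field_simp

theorem mul_one_add_sq_ne (hθ0 : θ ≠ 0) (hθ4 : θ ≠ 4) (hz : z ^ 2 + (2 - θ) * z + 1 = 0) :
    z * (1 + z) ^ 2 ≠ θ := by
  intro hfix
  have hsq : θ * (z ^ 2 - 1) = 0 := by linear_combination hfix - z * one_add_sq_eq hz
  have hroots : (z - 1) * (z + 1) = 0 := by
    linear_combination (mul_eq_zero.mp hsq).resolve_left hθ0
  rcases mul_eq_zero.mp hroots with hz_one | hz_neg_one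
  · obtain rfl : z = 1 := by linear_combination hz_one
    exact hθ4 (by linear_combination -hz)
  · exact one_add_ne_zero hθ0 hz (by linear_combination hz_neg_one)

end QuadraticRoot

theorem quadratic_root_is_two_periodic (p : ℕ) [Fact p.Prime] (θ : ℚ_[p])
    (hθ0 : θ ≠ 0) (hθ4 : θ ≠ 4) (z : ℚ_[p]) (hz : z ^ 2 + (2 - θ) * z + 1 = 0) :
    z * (1 + z) ^ 2 ≠ θ ∧ θ / (1 + θ / (1 + z) ^ 2) ^ 2 = z := by
  refine ⟨QuadraticRoot.mul_one_add_sq_ne hθ0 hθ4 hz, ?_⟩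
  rw [QuadraticRoot.div_one_add_sq_eq_inv hθ0 hz]
  exact QuadraticRoot.div_one_add_inv_sq_eq hθ0 hz
end

section
/- Let p > 3 be a prime and θ ∈ ℚ_p with |θ + 2/27|_p < 1 and such that -a_0 is a quadratic residue mod p, where a_0 is the leading p-adic digit of -1/3. Then the cubic t³ - t/3 = θ + 2/27 has exactly three solutions in ℚ_p. -/
/-!
Every solution is a `p`-adic integer, since for `‖t‖ > 1` the term `t³` dominates. Clearing the
denominator, the solutions are the roots in `ℤ_[p]` of `3t³ - t - 3(θ + 2/27)`, whose reduction
mod `p` is `3t³ - t = 3t(t - s)(t + s)` with `s² = 1/3`. These three residues are distinct simple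
roots for `p > 3`, so by Hensel's lemma each lifts to exactly one root in `ℤ_[p]`, and every root
arises this way.
-/

open Polynomial

theorem norm_le_one_of_norm_pow_add_mul_le_one {K : Type*} [NormedField K] [IsUltrametricDist K]
    {t u : K} {n : ℕ} (hn : 1 < n) (hu : ‖u‖ ≤ 1) (h : ‖t ^ n + u * t‖ ≤ 1) :
    ‖t‖ ≤ 1 := by
  by_contra! ht
  have hlt : ‖u * t‖ < ‖t ^ n‖ := calc
    ‖u * t‖ ≤ ‖t‖ := by rw [norm_mul]; exact mul_le_of_le_one_left (norm_nonneg t) hu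
    _ < ‖t‖ ^ n := lt_self_pow₀ ht hn
    _ = ‖t ^ n‖ := (norm_pow t n).symm
  rw [IsUltrametricDist.norm_add_eq_max_of_norm_ne_norm hlt.ne', max_eq_left hlt.le,
    norm_pow] at h
  exact h.not_gt (one_lt_pow₀ ht (by omega))

theorem ZMod.natCast_ne_zero_of_pos_of_lt {n p : ℕ} (h0 : 0 < n) (hn : n < p) :
    (n : ZMod p) ≠ 0 := by
  rw [Ne, ZMod.natCast_eq_zero_iff]
  exact fun hdvd => absurd (Nat.le_of_dvd h0 hdvd) (by omega)

section ResidueCubic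

variable {K : Type*} [Field K] {s : K}

theorem isRoot_cubic_iff (hs : 3 * s ^ 2 = 1) {x : K} :
    (C 3 * X ^ 3 - X : K[X]).IsRoot x ↔ x = 0 ∨ x = s ∨ x = -s := by
  have h3 : (3 : K) ≠ 0 := left_ne_zero_of_mul_eq_one hs
  have hfactor : 3 * x ^ 3 - x = 3 * (x * ((x - s) * (x + s))) := by linear_combination x * hs
  simp only [IsRoot, eval_sub, eval_mul, eval_C, eval_pow, eval_X]
  rw [hfactor, mul_eq_zero_iff_left h3, mul_eq_zero, mul_eq_zero, sub_eq_zero,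
    add_eq_zero_iff_eq_neg]

theorem ncard_setOf_isRoot_cubic (h2 : (2 : K) ≠ 0) (hs : 3 * s ^ 2 = 1) :
    {x : K | (C 3 * X ^ 3 - X : K[X]).IsRoot x}.ncard = 3 := by
  have hs0 : s ≠ 0 := by rintro rfl; simp at hs
  refine Set.ncard_eq_three.2 ⟨0, s, -s, hs0.symm, (neg_ne_zero.2 hs0).symm, ?_, ?_⟩
  · intro h
    exact hs0 ((mul_eq_zero_iff_left h2).1 (by linear_combination h))
  · ext x
    rw [Set.mem_ofPred_eq, isRoot_cubic_iff hs]
    simp only [Set.mem_insert_iff, Set.mem_singleton_iff]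

theorem eval_derivative_cubic_ne_zero (h2 : (2 : K) ≠ 0) (hs : 3 * s ^ 2 = 1) {x : K}
    (hx : (C 3 * X ^ 3 - X : K[X]).IsRoot x) :
    (C 3 * X ^ 3 - X : K[X]).derivative.eval x ≠ 0 := by
  have hderiv : (C 3 * X ^ 3 - X : K[X]).derivative.eval x = 9 * x ^ 2 - 1 := by
    simp only [derivative_sub, derivative_C_mul_X_pow, derivative_X, eval_sub, eval_C_mul,
      eval_pow, eval_X, eval_one]
    norm_num
  have hsq : x ^ 2 = 0 ∨ x ^ 2 = s ^ 2 := by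
    rcases (isRoot_cubic_iff hs).1 hx with rfl | rfl | rfl <;> simp
  rw [hderiv]
  rcases hsq with hsq | hsq
  · simp [hsq]
  · intro h
    exact h2 (by linear_combination h - 9 * hsq - 3 * hs)

end ResidueCubic

namespace PadicInt

variable {p : ℕ} [Fact p.Prime]

theorem toZMod_eq_zero_iff_norm_lt_one {x : ℤ_[p]} : toZMod x = 0 ↔ ‖x‖ < 1 := by
  rw [← RingHom.mem_ker, ker_toZMod, IsLocalRing.mem_maximalIdeal, mem_nonunits]

theorem toZMod_eq_iff_norm_sub_lt_one {x y : ℤ_[p]} :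
    toZMod x = toZMod y ↔ ‖x - y‖ < 1 := by
  rw [← toZMod_eq_zero_iff_norm_lt_one, map_sub, sub_eq_zero]

theorem norm_eq_one_of_toZMod_ne_zero {x : ℤ_[p]} (hx : toZMod x ≠ 0) : ‖x‖ = 1 :=
  (norm_le_one x).antisymm (not_lt.1 (mt toZMod_eq_zero_iff_norm_lt_one.2 hx))

theorem existsUnique_isRoot_toZMod_eq {F : ℤ_[p][X]} {x : ZMod p}
    (hroot : (F.map toZMod).IsRoot x) (hsimple : (F.map toZMod).derivative.eval x ≠ 0) :
    ∃! z : ℤ_[p], F.IsRoot z ∧ toZMod z = x := by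
  obtain ⟨a, rfl⟩ := ZMod.ringHom_surjective toZMod x
  rw [derivative_map, eval_map_apply] at hsimple
  rw [IsRoot, eval_map_apply, toZMod_eq_zero_iff_norm_lt_one] at hroot
  have hderiv := norm_eq_one_of_toZMod_ne_zero hsimple
  obtain ⟨z, hz, hza, -, huniq⟩ :=
    hensels_lemma (F := F) (a := a) (by simpa only [coe_aeval_eq_eval, hderiv, one_pow])
  simp only [coe_aeval_eq_eval, hderiv] at hz hza huniq
  exact ⟨z, ⟨hz, toZMod_eq_iff_norm_sub_lt_one.2 hza⟩,
    fun y ⟨hy, hya⟩ => huniq y hy (toZMod_eq_iff_norm_sub_lt_one.1 hya)⟩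

theorem ncard_setOf_isRoot_eq {F : ℤ_[p][X]}
    (hsimple : ∀ x, (F.map toZMod).IsRoot x → (F.map toZMod).derivative.eval x ≠ 0) :
    {z : ℤ_[p] | F.IsRoot z}.ncard = {x : ZMod p | (F.map toZMod).IsRoot x}.ncard := by
  refine Set.ncard_congr (fun z _ => toZMod z) (fun z hz => IsRoot.map hz)
    (fun z y hz hy hzy => ?_) (fun x hx => ?_)
  · have hroot : (F.map toZMod).IsRoot (toZMod z) := IsRoot.map hz
    exact (existsUnique_isRoot_toZMod_eq hroot (hsimple _ hroot)).unique
      ⟨hz, rfl⟩ ⟨hy, hzy.symm⟩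
  · obtain ⟨z, ⟨hz, rfl⟩, -⟩ := existsUnique_isRoot_toZMod_eq hx (hsimple x hx)
    exact ⟨z, hz, rfl⟩

noncomputable def cubicPoly (d : ℤ_[p]) : ℤ_[p][X] := C 3 * X ^ 3 - X - C (3 * d)

theorem isRoot_cubicPoly_iff {d z : ℤ_[p]} :
    (cubicPoly d).IsRoot z ↔ (z : ℚ_[p]) ^ 3 - z / 3 = d := by
  have hcast :
      ((3 * z ^ 3 - z - 3 * d : ℤ_[p]) : ℚ_[p]) = 3 * ((z : ℚ_[p]) ^ 3 - z / 3 - d) := by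
    have h3 : ((3 : ℤ_[p]) : ℚ_[p]) = 3 := coe_natCast 3
    push_cast [h3]; ring
  simp only [cubicPoly, IsRoot, eval_sub, eval_mul, eval_C, eval_pow, eval_X]
  rw [← coe_eq_zero, hcast, mul_eq_zero_iff_left three_ne_zero, sub_eq_zero]

theorem map_toZMod_cubicPoly {d : ℤ_[p]} (hd : ‖d‖ < 1) :
    (cubicPoly d).map toZMod = C 3 * X ^ 3 - X := by
  simp [cubicPoly, toZMod_eq_zero_iff_norm_lt_one.2 hd, map_ofNat]

theorem ncard_setOf_cube_sub_div_three_eq (hp : p ≠ 3) (d : ℤ_[p]) :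
    {t : ℚ_[p] | t ^ 3 - t / 3 = d}.ncard = {z : ℤ_[p] | (cubicPoly d).IsRoot z}.ncard := by
  have h3 : ‖(3 : ℚ_[p])‖ = 1 := by
    exact_mod_cast Padic.norm_natCast_eq_one_iff.2
      ((Nat.coprime_primes Fact.out Nat.prime_three).2 hp)
  have hint {t : ℚ_[p]} (ht : t ^ 3 - t / 3 = d) : ‖t‖ ≤ 1 := by
    refine norm_le_one_of_norm_pow_add_mul_le_one (u := -3⁻¹) (n := 3) (by norm_num)
      (by simp [h3]) ?_
    rw [neg_mul, ← div_eq_inv_mul, ← sub_eq_add_neg, ht]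
    exact d.norm_le_one
  have hsolutions : {t : ℚ_[p] | t ^ 3 - t / 3 = d} =
      ((↑) : ℤ_[p] → ℚ_[p]) '' {z : ℤ_[p] | (cubicPoly d).IsRoot z} := by
    ext t
    constructor
    · intro (ht : t ^ 3 - t / 3 = d)
      exact ⟨⟨t, hint ht⟩, isRoot_cubicPoly_iff.2 ht, rfl⟩
    · rintro ⟨z, hz, rfl⟩
      exact isRoot_cubicPoly_iff.1 hz
  rw [hsolutions]
  exact Set.ncard_image_of_injective _ Subtype.coe_injective

end PadicInt

open PadicInt in
theorem cubic_three_solutions_of_small_norm (p : ℕ) [Fact p.Prime] (hp : 3 < p)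
    (θ : ℚ_[p]) (hθ : ‖θ + 2 / 27‖ < 1)
    (hQR : IsSquare ((3 : ZMod p)⁻¹)) :
    {t : ℚ_[p] | t ^ 3 - t / 3 = θ + 2 / 27}.ncard = 3 := by
  have h2 : (2 : ZMod p) ≠ 0 := by
    exact_mod_cast ZMod.natCast_ne_zero_of_pos_of_lt two_pos (by omega)
  have h3 : (3 : ZMod p) ≠ 0 := by
    exact_mod_cast ZMod.natCast_ne_zero_of_pos_of_lt three_pos hp
  obtain ⟨s, hs⟩ := hQR
  have hs3 : 3 * s ^ 2 = 1 := by rw [sq, ← hs, mul_inv_cancel₀ h3]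
  let d : ℤ_[p] := ⟨θ + 2 / 27, hθ.le⟩
  rw [show θ + 2 / 27 = (d : ℚ_[p]) from rfl, ncard_setOf_cube_sub_div_three_eq hp.ne' d,
    ncard_setOf_isRoot_eq, map_toZMod_cubicPoly hθ]
  · exact ncard_setOf_isRoot_cubic h2 hs3
  · rw [map_toZMod_cubicPoly hθ]
    exact fun x hx => eval_derivative_cubic_ne_zero h2 hs3 hx
end
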